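/- arXiv:2105.11884 — 3 statements merged into one kernel-verified Lean document; each statement's English description precedes it below -/
import Mathlib

section
/- Let (G,≤) be a lattice-ordered group (ℓ-group) and N ◁ G a normal subgroup that is lattice-ordered (a sublattice of G). Consider the orbit category of the ordered set (G,≤), viewed as the simple category with a unique arrow x → y iff x ≤ y, under the action of N by right multiplication. Then for each arrow orbit a of this orbit category there is at most one irreducible arrow b such that a = b * y for some loop y at target(b); and when such an irreducible b exists, the loop y in this decomposition is unique. -/
set_option linter.unusedVariables false

/-- The setoid of right-multiplication `N`-orbits of elements of `L`. -/
def poObjSetoid (L : Type) [Group L] (N : Subgroup L) : Setoid L where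
  r x y := ∃ n ∈ N, x * n = y
  iseqv := by
    constructor
    · exact fun x => ⟨1, N.one_mem, mul_one x⟩
    · rintro x y ⟨n, hn, rfl⟩
      exact ⟨n⁻¹, N.inv_mem hn, by rw [mul_assoc, mul_inv_cancel, mul_one]⟩
    · rintro x y z ⟨n, hn, rfl⟩ ⟨m, hm, rfl⟩
      exact ⟨n * m, N.mul_mem hn hm, by rw [mul_assoc]⟩

/-- The setoid of right-multiplication `N`-orbits of arrows of the simple
category associated with the ordered set `(L, ≤)` (one arrow `x → y` iff
`x ≤ y`). -/
def poArrSetoid (L : Type) [Group L] [Lattice L] (N : Subgroup L) :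
    Setoid {p : L × L // p.1 ≤ p.2} where
  r p q := ∃ n ∈ N, p.1.1 * n = q.1.1 ∧ p.1.2 * n = q.1.2
  iseqv := by
    constructor
    · exact fun p => ⟨1, N.one_mem, mul_one _, mul_one _⟩
    · rintro p q ⟨n, hn, h1, h2⟩
      exact ⟨n⁻¹, N.inv_mem hn,
        by rw [← h1, mul_assoc, mul_inv_cancel, mul_one],
        by rw [← h2, mul_assoc, mul_inv_cancel, mul_one]⟩
    · rintro p q s ⟨n, hn, h1, h2⟩ ⟨m, hm, h3, h4⟩
      exact ⟨n * m, N.mul_mem hn hm,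
        by rw [← mul_assoc, h1, h3], by rw [← mul_assoc, h2, h4]⟩

/-- Source of an arrow orbit. -/
def poSrcQ (L : Type) [Group L] [Lattice L] (N : Subgroup L) :
    Quotient (poArrSetoid L N) → Quotient (poObjSetoid L N) :=
  Quotient.lift (fun p => Quotient.mk (poObjSetoid L N) p.1.1) (by
    rintro p q ⟨n, hn, h1, h2⟩
    exact Quotient.sound ⟨n, hn, h1⟩)

/-- Target of an arrow orbit. -/
def poTgtQ (L : Type) [Group L] [Lattice L] (N : Subgroup L) :
    Quotient (poArrSetoid L N) → Quotient (poObjSetoid L N) :=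
  Quotient.lift (fun p => Quotient.mk (poObjSetoid L N) p.1.2) (by
    rintro p q ⟨n, hn, h1, h2⟩
    exact Quotient.sound ⟨n, hn, h2⟩)

/-- An arrow orbit is an identity (loop) orbit. -/
def poIsId (L : Type) [Group L] [Lattice L] (N : Subgroup L)
    (α : Quotient (poArrSetoid L N)) : Prop :=
  ∃ x : L, α = Quotient.mk (poArrSetoid L N) ⟨(x, x), le_refl x⟩

/-- `poCompRel L N α β γ` : in the orbit category, the composite of the arrow
orbits `α` and `β` is `γ` (computed on composable representatives). -/
def poCompRel (L : Type) [Group L] [Lattice L] (N : Subgroup L)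
    (α β γ : Quotient (poArrSetoid L N)) : Prop :=
  ∃ (x y z : L) (h1 : x ≤ y) (h2 : y ≤ z),
    α = Quotient.mk (poArrSetoid L N) ⟨(x, y), h1⟩ ∧
    β = Quotient.mk (poArrSetoid L N) ⟨(y, z), h2⟩ ∧
    γ = Quotient.mk (poArrSetoid L N) ⟨(x, z), h1.trans h2⟩

/-- An arrow of the orbit category is irreducible: it is not of the form
`b * l` with `b` an arrow having the same endpoints and `l` a non-identity
loop. -/
def poIrreducible (L : Type) [Group L] [Lattice L] (N : Subgroup L)
    (β : Quotient (poArrSetoid L N)) : Prop :=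
  ¬ ∃ b l, poCompRel L N b l β ∧ poTgtQ L N b = poTgtQ L N β ∧ ¬ poIsId L N l

/-- Let `(L, ≤)` be an ℓ-group and `N ◁ L` a normal subgroup
that is a sublattice of `L`.  In the orbit category of the ordered set
`(L, ≤)` (viewed as a simple category) under the action of `N` by right
multiplication, each arrow orbit `α` admits at most one decomposition
`α = b * l` with `b` irreducible (with the same endpoints as `α`) and `l` a
loop at the target; in particular when such an irreducible `b` exists, the
loop `l` is unique as well. -/
theorem lgroup_unique_irreducible_decomposition
    (L : Type) [Group L] [Lattice L]
    (hpo : ∀ x y a b : L, a ≤ b ↔ x * a * y ≤ x * b * y)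
    (N : Subgroup L) (hN : N.Normal)
    (hlat : ∀ a b : L, a ∈ N → b ∈ N → a ⊓ b ∈ N ∧ a ⊔ b ∈ N) :
    ∀ (α b l b' l' : Quotient (poArrSetoid L N)),
      poCompRel L N b l α → poTgtQ L N b = poTgtQ L N α → poIrreducible L N b →
      poCompRel L N b' l' α → poTgtQ L N b' = poTgtQ L N α → poIrreducible L N b' →
      b = b' ∧ l = l' := by
  intro α b l b' l' hc htb hib hc' htb' hib'
  obtain ⟨x, y, z, h1, h2, hb, hl, ha⟩ := hc
  obtain ⟨x', y', z', h1', h2', hb', hl', ha'⟩ := hc'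
  -- translation invariance lemmas
  have mulR : ∀ a b c : L, a ≤ b → a * c ≤ b * c := fun a b c h => by
    simpa using (hpo 1 c a b).mp h
  have mulL : ∀ c a b : L, a ≤ b → c * a ≤ c * b := fun c a b h => by
    simpa using (hpo c 1 a b).mp h
  have mulinf : ∀ c a b : L, c * (a ⊓ b) = c * a ⊓ c * b := by
    intro c a b
    refine le_antisymm (le_inf (mulL _ _ _ inf_le_left) (mulL _ _ _ inf_le_right)) ?_
    have ha1 : c⁻¹ * (c * a ⊓ c * b) ≤ a := by
      have := mulL c⁻¹ _ _ (inf_le_left (a := c * a) (b := c * b))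
      simpa [inv_mul_cancel_left] using this
    have hb1 : c⁻¹ * (c * a ⊓ c * b) ≤ b := by
      have := mulL c⁻¹ _ _ (inf_le_right (a := c * a) (b := c * b))
      simpa [inv_mul_cancel_left] using this
    have := mulL c _ _ (le_inf ha1 hb1)
    simpa [mul_inv_cancel_left] using this
  -- key maximality lemma
  have key : ∀ (X Z Y Y' n n' : L), n ∈ N → n' ∈ N →
      Y * n = Z → Y' * n' = Z → ∀ (hxY : X ≤ Y), X ≤ Y' →
      poIrreducible L N (Quotient.mk (poArrSetoid L N) ⟨(X, Y), hxY⟩) →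
      Y ≤ Y' := by
    intro X Z Y Y' n n' hn hn' hYn hY'n hxY hxY' hirr
    by_contra hcon
    have hY : Y = Z * n⁻¹ := by rw [← hYn]; group
    have hY' : Y' = Z * n'⁻¹ := by rw [← hY'n]; group
    have hp : n⁻¹ ⊓ n'⁻¹ ∈ N := (hlat _ _ (N.inv_mem hn) (N.inv_mem hn')).1
    have hwzp : Y ⊓ Y' = Z * (n⁻¹ ⊓ n'⁻¹) := by rw [hY, hY', ← mulinf]
    have hwY : Y ⊓ Y' ≤ Y := inf_le_left
    have hxw : X ≤ Y ⊓ Y' := le_inf hxY hxY'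
    have hwne : Y ⊓ Y' ≠ Y := by
      intro h
      exact hcon (inf_eq_left.mp h)
    have hk : (n⁻¹ ⊓ n'⁻¹)⁻¹ * n⁻¹ ∈ N := N.mul_mem (N.inv_mem hp) (N.inv_mem hn)
    have hwk : (Y ⊓ Y') * ((n⁻¹ ⊓ n'⁻¹)⁻¹ * n⁻¹) = Y := by
      rw [hwzp, hY]; group
    refine hirr ⟨Quotient.mk (poArrSetoid L N) ⟨(X, Y ⊓ Y'), hxw⟩,
      Quotient.mk (poArrSetoid L N) ⟨(Y ⊓ Y', Y), hwY⟩,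
      ⟨X, Y ⊓ Y', Y, hxw, hwY, rfl, rfl, rfl⟩, ?_, ?_⟩
    · exact Quotient.sound ⟨(n⁻¹ ⊓ n'⁻¹)⁻¹ * n⁻¹, hk, hwk⟩
    · rintro ⟨u, hu⟩
      obtain ⟨k', hk', e1, e2⟩ := Quotient.exact hu
      exact hwne (mul_right_cancel (e1.trans e2.symm))
  -- extract data from the two decompositions
  rw [hb, ha] at htb
  obtain ⟨n, hn, hyn⟩ := Quotient.exact htb
  rw [hb', ha'] at htb'
  obtain ⟨n₀, hn₀, hyn₀⟩ := Quotient.exact htb'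
  obtain ⟨k, hkN, hk1, hk2⟩ := Quotient.exact (ha'.symm.trans ha)
  have hn' : k⁻¹ * n₀ * k ∈ N := by simpa using hN.conj_mem n₀ hn₀ k⁻¹
  have hy''z : (y' * k) * (k⁻¹ * n₀ * k) = z := by
    have : (y' * k) * (k⁻¹ * n₀ * k) = (y' * n₀) * k := by group
    rw [this, hyn₀, hk2]
  have hxy'' : x ≤ y' * k := by
    have := mulR _ _ k h1'
    rwa [hk1] at this
  have hb'' : b' = Quotient.mk (poArrSetoid L N) ⟨(x, y' * k), hxy''⟩ :=
    hb'.trans (Quotient.sound ⟨k, hkN, hk1, rfl⟩)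
  rw [hb] at hib
  rw [hb''] at hib'
  have hle1 : y ≤ y' * k := key x z y (y' * k) n (k⁻¹ * n₀ * k) hn hn' hyn hy''z h1 hxy'' hib
  have hle2 : y' * k ≤ y := key x z (y' * k) y (k⁻¹ * n₀ * k) n hn' hn hy''z hyn hxy'' h1 hib'
  have yeq : y = y' * k := le_antisymm hle1 hle2
  have hy''le : y' * k ≤ z := by
    have := mulR _ _ k h2'
    rwa [hk2] at this
  constructor
  · rw [hb, hb'']
    exact congrArg _ (Subtype.ext (show (x, y) = (x, y' * k) by rw [yeq]))
  · rw [hl, hl']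
    have : Quotient.mk (poArrSetoid L N) ⟨(y', z'), h2'⟩ =
        Quotient.mk (poArrSetoid L N) ⟨(y, z), h2⟩ :=
      Quotient.sound ⟨k, hkN, yeq.symm, hk2⟩
    exact this.symm
end

section
/- Let K be a category and G ≤ Aut(K) a translative automorphism group that is right-normal on K, such that the orbit category K/G is uniquely representable by irreducible arrows, with r(x) the irreducible part and n(x) the loop part of an arrow x (so x = r(x)*n(x)). Then the partial operation x • y := r(x * y) on Mor(K/G) is associative and satisfies x • y = r(x) • r(y); with this composition the image r[K/G] is a category (the flat orbit category), and r is a category homomorphism from (K/G, *) onto (r[K/G], •). -/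
set_option linter.unusedVariables false

/-- A small category, presented as a directed graph with a partial composition
that is defined exactly on composable pairs of arrows. -/
structure SmallCat where
  Obj : Type
  Arr : Type
  src : Arr → Obj
  tgt : Arr → Obj
  id : Obj → Arr
  src_id : ∀ x, src (id x) = x
  tgt_id : ∀ x, tgt (id x) = x
  comp : ∀ a b, tgt a = src b → Arr
  src_comp : ∀ a b h, src (comp a b h) = src a
  tgt_comp : ∀ a b h, tgt (comp a b h) = tgt b
  id_comp : ∀ a, comp (id (src a)) a (tgt_id (src a)) = a
  comp_id : ∀ a, comp a (id (tgt a)) ((src_id (tgt a)).symm) = a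
  assoc : ∀ a b c (hab : tgt a = src b) (hbc : tgt b = src c),
    comp (comp a b hab) c (by rw [tgt_comp]; exact hbc) =
    comp a (comp b c hbc) (by rw [src_comp]; exact hab)

/-- An action of a group `G` on a small category `K` by category automorphisms,
written exponentially (left-associative: `a^(g*h) = (a^g)^h`). -/
structure CatAction (G : Type) [Group G] (K : SmallCat) where
  onObj : G → K.Obj → K.Obj
  onArr : G → K.Arr → K.Arr
  onObj_one : ∀ x, onObj 1 x = x
  onObj_mul : ∀ g h x, onObj (g * h) x = onObj h (onObj g x)
  onArr_one : ∀ a, onArr 1 a = a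
  onArr_mul : ∀ g h a, onArr (g * h) a = onArr h (onArr g a)
  src_onArr : ∀ g a, K.src (onArr g a) = onObj g (K.src a)
  tgt_onArr : ∀ g a, K.tgt (onArr g a) = onObj g (K.tgt a)
  onArr_id : ∀ g x, onArr g (K.id x) = K.id (onObj g x)
  onArr_comp : ∀ g a b (h : K.tgt a = K.src b),
    onArr g (K.comp a b h) = K.comp (onArr g a) (onArr g b)
      (by rw [tgt_onArr, src_onArr, h])

/-- The action is semi-regular: only the unit fixes an object or an arrow. -/
def SemiRegular {G : Type} [Group G] {K : SmallCat} (ρ : CatAction G K) : Prop :=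
  (∀ g x, ρ.onObj g x = x → g = 1) ∧ (∀ g a, ρ.onArr g a = a → g = 1)

/-- Orbit of an object. -/
def orbitO {G : Type} [Group G] {K : SmallCat} (ρ : CatAction G K) (x : K.Obj) : Set K.Obj :=
  {y | ∃ g : G, ρ.onObj g x = y}

/-- The arrows of the full subcategory generated by the orbit of `x`. -/
def orbitA {G : Type} [Group G] {K : SmallCat} (ρ : CatAction G K) (x : K.Obj) : Set K.Arr :=
  {a | K.src a ∈ orbitO ρ x ∧ K.tgt a ∈ orbitO ρ x}

/-- The setoid of object orbits. -/
def objSetoid {G : Type} [Group G] {K : SmallCat} (ρ : CatAction G K) : Setoid K.Obj where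
  r x y := ∃ g : G, ρ.onObj g x = y
  iseqv := by
    constructor
    · exact fun x => ⟨1, ρ.onObj_one x⟩
    · rintro x y ⟨g, rfl⟩
      exact ⟨g⁻¹, by rw [← ρ.onObj_mul, mul_inv_cancel, ρ.onObj_one]⟩
    · rintro x y z ⟨g, rfl⟩ ⟨h, rfl⟩
      exact ⟨g * h, by rw [ρ.onObj_mul]⟩

/-- The setoid of arrow orbits. -/
def arrSetoid {G : Type} [Group G] {K : SmallCat} (ρ : CatAction G K) : Setoid K.Arr where
  r a b := ∃ g : G, ρ.onArr g a = b
  iseqv := by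
    constructor
    · exact fun a => ⟨1, ρ.onArr_one a⟩
    · rintro a b ⟨g, rfl⟩
      exact ⟨g⁻¹, by rw [← ρ.onArr_mul, mul_inv_cancel, ρ.onArr_one]⟩
    · rintro a b c ⟨g, rfl⟩ ⟨h, rfl⟩
      exact ⟨g * h, by rw [ρ.onArr_mul]⟩

/-- The source of an arrow orbit. -/
def srcQ {G : Type} [Group G] {K : SmallCat} (ρ : CatAction G K) :
    Quotient (arrSetoid ρ) → Quotient (objSetoid ρ) :=
  Quotient.lift (fun a => Quotient.mk (objSetoid ρ) (K.src a)) (by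
    rintro a b ⟨g, rfl⟩
    exact Quotient.sound ⟨g, (ρ.src_onArr g a).symm⟩)

/-- The target of an arrow orbit. -/
def tgtQ {G : Type} [Group G] {K : SmallCat} (ρ : CatAction G K) :
    Quotient (arrSetoid ρ) → Quotient (objSetoid ρ) :=
  Quotient.lift (fun a => Quotient.mk (objSetoid ρ) (K.tgt a)) (by
    rintro a b ⟨g, rfl⟩
    exact Quotient.sound ⟨g, (ρ.tgt_onArr g a).symm⟩)

/-- The identity arrow orbit of an object orbit. -/
def idQ {G : Type} [Group G] {K : SmallCat} (ρ : CatAction G K) :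
    Quotient (objSetoid ρ) → Quotient (arrSetoid ρ) :=
  Quotient.lift (fun x => Quotient.mk (arrSetoid ρ) (K.id x)) (by
    rintro x y ⟨g, rfl⟩
    exact Quotient.sound ⟨g, ρ.onArr_id g x⟩)

/-- `CompRelQ ρ α β γ` expresses that in the orbit category the composite of the
arrow orbits `α` and `β` is `γ`, i.e. that `γ` is the orbit of a composite of
composable representatives of `α` and `β`. -/
def CompRelQ {G : Type} [Group G] {K : SmallCat} (ρ : CatAction G K)
    (α β γ : Quotient (arrSetoid ρ)) : Prop :=
  ∃ (a b : K.Arr) (h : K.tgt a = K.src b),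
    Quotient.mk (arrSetoid ρ) a = α ∧ Quotient.mk (arrSetoid ρ) b = β ∧
    Quotient.mk (arrSetoid ρ) (K.comp a b h) = γ

/-- An annotation: a contravariant homomorphism from a small category into a group. -/
structure Annotation (K : SmallCat) (G : Type) [Group G] where
  map : K.Arr → G
  map_id : ∀ x, map (K.id x) = 1
  map_comp : ∀ a b (h : K.tgt a = K.src b), map (K.comp a b h) = map b * map a

/-- The partial operation `⊙` of a representation `(K, A, G)`. -/
def odot {G : Type} [Group G] {K : SmallCat} (A : Annotation K G) (p q : K.Arr × G)
    (h : K.tgt p.1 = K.src q.1) (_ : q.2 = A.map p.1 * p.2) : K.Arr × G :=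
  (K.comp p.1 q.1 h, p.2)

/-- The unfolding `E(K,A,G)` of a representation `(K,A,G)`. -/
def Unfolding (K : SmallCat) {G : Type} [Group G] (A : Annotation K G) : SmallCat where
  Obj := K.Obj × G
  Arr := K.Arr × G
  src p := (K.src p.1, p.2)
  tgt p := (K.tgt p.1, A.map p.1 * p.2)
  id x := (K.id x.1, x.2)
  src_id x := by simp [K.src_id]
  tgt_id x := by simp [K.tgt_id, A.map_id]
  comp p q h := (K.comp p.1 q.1 (congrArg Prod.fst h), p.2)
  src_comp p q h := by simp [K.src_comp]
  tgt_comp p q h := by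
    have h2 : A.map p.1 * p.2 = q.2 := congrArg Prod.snd h
    simp [K.tgt_comp, A.map_comp, mul_assoc, h2]
  id_comp p := by
    refine Prod.ext ?_ rfl
    exact K.id_comp p.1
  comp_id p := by
    refine Prod.ext ?_ rfl
    exact K.comp_id p.1
  assoc p q s hpq hqs := by
    refine Prod.ext ?_ rfl
    exact K.assoc p.1 q.1 s.1 (congrArg Prod.fst hpq) (congrArg Prod.fst hqs)

/-- A homomorphism (functor) between small categories. -/
structure CatHom (K L : SmallCat) where
  onObj : K.Obj → L.Obj
  onArr : K.Arr → L.Arr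
  src_onArr : ∀ a, L.src (onArr a) = onObj (K.src a)
  tgt_onArr : ∀ a, L.tgt (onArr a) = onObj (K.tgt a)
  onArr_id : ∀ x, onArr (K.id x) = L.id (onObj x)
  onArr_comp : ∀ a b (h : K.tgt a = K.src b),
    onArr (K.comp a b h) = L.comp (onArr a) (onArr b)
      (by rw [tgt_onArr, src_onArr, h])

/-- A functor is full. -/
def IsFull {K L : SmallCat} (F : CatHom K L) : Prop :=
  ∀ (x y : K.Obj) (b : L.Arr), L.src b = F.onObj x → L.tgt b = F.onObj y →
    ∃ a : K.Arr, K.src a = x ∧ K.tgt a = y ∧ F.onArr a = b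

/-- A functor is faithful. -/
def IsFaithful {K L : SmallCat} (F : CatHom K L) : Prop :=
  ∀ a a' : K.Arr, K.src a = K.src a' → K.tgt a = K.tgt a' → F.onArr a = F.onArr a' → a = a'

/-- A translative automorphism group action: semi-regular, and any two orbits
generate isomorphic full subcategories, by an isomorphism commuting with the action. -/
def Translative {G : Type} [Group G] {K : SmallCat} (ρ : CatAction G K) : Prop :=
  SemiRegular ρ ∧
  ∀ a b : K.Obj, ∃ (φo : K.Obj → K.Obj) (φa : K.Arr → K.Arr),
    Set.BijOn φo (orbitO ρ a) (orbitO ρ b) ∧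
    Set.BijOn φa (orbitA ρ a) (orbitA ρ b) ∧
    (∀ f ∈ orbitA ρ a, K.src (φa f) = φo (K.src f)) ∧
    (∀ f ∈ orbitA ρ a, K.tgt (φa f) = φo (K.tgt f)) ∧
    (∀ x ∈ orbitO ρ a, φa (K.id x) = K.id (φo x)) ∧
    (∀ (f f' : K.Arr) (h : K.tgt f = K.src f'), f ∈ orbitA ρ a → f' ∈ orbitA ρ a →
      ∀ h', φa (K.comp f f' h) = K.comp (φa f) (φa f') h') ∧
    (∀ (g : G), ∀ x ∈ orbitO ρ a, φo (ρ.onObj g x) = ρ.onObj g (φo x)) ∧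
    (∀ (g : G), ∀ f ∈ orbitA ρ a, φa (ρ.onArr g f) = ρ.onArr g (φa f))

/-- `T` is a transversal of the object orbits. -/
def IsTransversal {G : Type} [Group G] {K : SmallCat} (ρ : CatAction G K)
    (T : Set K.Obj) : Prop :=
  ∀ x : K.Obj, ∃! t, t ∈ T ∧ t ∈ orbitO ρ x

/-- The natural annotation associated with the canonical automorphisms `gT`. -/
def natAnn {G : Type} [Group G] {K : SmallCat} (ρ : CatAction G K)
    (gT : K.Obj → G) (a : K.Arr) : G :=
  gT (K.tgt a) * (gT (K.src a))⁻¹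

/-- `RightNormalWith ρ C` : the map `C` witnesses that `ρ` is right-normal:
in the orbit category, loop orbits can be moved from the left of an arrow orbit
to its right. -/
def RightNormalWith {G : Type} [Group G] {K : SmallCat} (ρ : CatAction G K)
    (C : Quotient (arrSetoid ρ) → Quotient (arrSetoid ρ) → Quotient (arrSetoid ρ)) : Prop :=
  (∀ (a x : K.Arr),
    srcQ ρ (Quotient.mk (arrSetoid ρ) x) = srcQ ρ (Quotient.mk (arrSetoid ρ) a) →
    tgtQ ρ (Quotient.mk (arrSetoid ρ) x) = srcQ ρ (Quotient.mk (arrSetoid ρ) a) →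
    ((srcQ ρ (C (Quotient.mk (arrSetoid ρ) a) (Quotient.mk (arrSetoid ρ) x)) =
        tgtQ ρ (Quotient.mk (arrSetoid ρ) a) ∧
      tgtQ ρ (C (Quotient.mk (arrSetoid ρ) a) (Quotient.mk (arrSetoid ρ) x)) =
        tgtQ ρ (Quotient.mk (arrSetoid ρ) a)) ∧
      (∀ (x' a' : K.Arr) (h1 : K.tgt x' = K.src a'),
        Quotient.mk (arrSetoid ρ) x' = Quotient.mk (arrSetoid ρ) x →
        Quotient.mk (arrSetoid ρ) a' = Quotient.mk (arrSetoid ρ) a →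
        ∀ (a'' c : K.Arr) (h2 : K.tgt a'' = K.src c),
          Quotient.mk (arrSetoid ρ) a'' = Quotient.mk (arrSetoid ρ) a →
          Quotient.mk (arrSetoid ρ) c =
            C (Quotient.mk (arrSetoid ρ) a) (Quotient.mk (arrSetoid ρ) x) →
          Quotient.mk (arrSetoid ρ) (K.comp x' a' h1) =
            Quotient.mk (arrSetoid ρ) (K.comp a'' c h2)))) ∧
  (∀ a : K.Arr,
    C (Quotient.mk (arrSetoid ρ) a) (Quotient.mk (arrSetoid ρ) (K.id (K.src a))) =
      Quotient.mk (arrSetoid ρ) (K.id (K.tgt a)))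

/-- The action `ρ` is right-normal. -/
def RightNormal {G : Type} [Group G] {K : SmallCat} (ρ : CatAction G K) : Prop :=
  ∃ C, RightNormalWith ρ C

/-- An arrow orbit is an identity orbit. -/
def IsIdQ {G : Type} [Group G] {K : SmallCat} (ρ : CatAction G K)
    (α : Quotient (arrSetoid ρ)) : Prop :=
  ∃ x : K.Obj, α = Quotient.mk (arrSetoid ρ) (K.id x)

/-- An arrow of the orbit category is reducible: it is an arrow with the same
endpoints followed by a non-identity loop. -/
def ReducibleQ {G : Type} [Group G] {K : SmallCat} (ρ : CatAction G K)
    (β : Quotient (arrSetoid ρ)) : Prop :=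
  ∃ b l, CompRelQ ρ b l β ∧ tgtQ ρ b = tgtQ ρ β ∧ ¬ IsIdQ ρ l

/-- An arrow of the orbit category is irreducible. -/
def IrreducibleQ {G : Type} [Group G] {K : SmallCat} (ρ : CatAction G K)
    (β : Quotient (arrSetoid ρ)) : Prop :=
  ¬ ReducibleQ ρ β

/-- The orbit category is uniquely representable by irreducible arrows,
with irreducible part `r` and loop part `n`. -/
def UniqRep {G : Type} [Group G] {K : SmallCat} (ρ : CatAction G K)
    (r n : Quotient (arrSetoid ρ) → Quotient (arrSetoid ρ)) : Prop :=
  (∀ α, IrreducibleQ ρ (r α) ∧ srcQ ρ (r α) = srcQ ρ α ∧ tgtQ ρ (r α) = tgtQ ρ α ∧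
    srcQ ρ (n α) = tgtQ ρ α ∧ tgtQ ρ (n α) = tgtQ ρ α ∧ CompRelQ ρ (r α) (n α) α) ∧
  (∀ α b l, CompRelQ ρ b l α → tgtQ ρ b = tgtQ ρ α → srcQ ρ l = tgtQ ρ l →
    IrreducibleQ ρ b → b = r α ∧ l = n α)

/-- A right-groupal category: a small category whose objects form a group which
acts on the category by a left-associative automorphism action, compatible with
right multiplication on the objects. -/
structure RGC where
  K : SmallCat
  mul : K.Obj → K.Obj → K.Obj
  one : K.Obj
  inv : K.Obj → K.Obj
  mul_assoc : ∀ x y z, mul (mul x y) z = mul x (mul y z)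
  one_mul : ∀ x, mul one x = x
  mul_one : ∀ x, mul x one = x
  inv_mul : ∀ x, mul (inv x) x = one
  mul_inv : ∀ x, mul x (inv x) = one
  act : K.Arr → K.Obj → K.Arr
  act_one : ∀ a, act a one = a
  act_mul : ∀ a x y, act (act a x) y = act a (mul x y)
  src_act : ∀ a x, K.src (act a x) = mul (K.src a) x
  tgt_act : ∀ a x, K.tgt (act a x) = mul (K.tgt a) x
  act_id : ∀ y x, act (K.id y) x = K.id (mul y x)
  act_comp : ∀ a b (h : K.tgt a = K.src b) x,
    act (K.comp a b h) x = K.comp (act a x) (act b x) (by rw [tgt_act, src_act, h])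

/-- A groupal category: a right-groupal category together with a commuting
second (left-multiplication style) action satisfying the interchange law. -/
structure GroupalCat extends RGC where
  lact : K.Obj → K.Arr → K.Arr
  lact_one : ∀ a, lact one a = a
  lact_mul : ∀ x y a, lact x (lact y a) = lact (mul x y) a
  src_lact : ∀ x a, K.src (lact x a) = mul x (K.src a)
  tgt_lact : ∀ x a, K.tgt (lact x a) = mul x (K.tgt a)
  lact_id : ∀ x y, lact x (K.id y) = K.id (mul x y)
  lact_comp : ∀ x a b (h : K.tgt a = K.src b),
    lact x (K.comp a b h) = K.comp (lact x a) (lact x b) (by rw [tgt_lact, src_lact, h])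
  lact_act : ∀ x a y, lact x (act a y) = act (lact x a) y
  interchange : ∀ (a b : K.Arr),
    K.comp (act a (K.src b)) (lact (K.tgt a) b) (by rw [tgt_act, src_lact]) =
    K.comp (lact (K.src a) b) (act a (K.tgt b)) (by rw [tgt_lact, src_act])

/-- A po-group `P`, viewed as the simple category with a unique arrow `x → y` iff `x ≤ y`. -/
def poCat (P : Type) [Group P] [PartialOrder P] : SmallCat where
  Obj := P
  Arr := {p : P × P // p.1 ≤ p.2}
  src p := p.1.1
  tgt p := p.1.2
  id x := ⟨(x, x), le_refl x⟩
  src_id x := rfl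
  tgt_id x := rfl
  comp a b h := ⟨(a.1.1, b.1.2), a.2.trans ((show (a.1).2 = (b.1).1 from h).trans_le b.2)⟩
  src_comp a b h := rfl
  tgt_comp a b h := rfl
  id_comp a := rfl
  comp_id a := rfl
  assoc a b c hab hbc := rfl

section AuxFlat

lemma comp_congr' (K : SmallCat) {a a' b b' : K.Arr} (ha : a = a') (hb : b = b')
    (h : K.tgt a = K.src b) (h' : K.tgt a' = K.src b') :
    K.comp a b h = K.comp a' b' h' := by subst ha; subst hb; rfl

variable {G : Type} [Group G] {K : SmallCat} {ρ : CatAction G K}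
variable {r n : Quotient (arrSetoid ρ) → Quotient (arrSetoid ρ)}

lemma srcQ_mk (a : K.Arr) :
    srcQ ρ (Quotient.mk (arrSetoid ρ) a) = Quotient.mk (objSetoid ρ) (K.src a) := rfl

lemma tgtQ_mk (a : K.Arr) :
    tgtQ ρ (Quotient.mk (arrSetoid ρ) a) = Quotient.mk (objSetoid ρ) (K.tgt a) := rfl

lemma rep_src (β : Quotient (arrSetoid ρ)) (y : K.Obj)
    (h : srcQ ρ β = Quotient.mk (objSetoid ρ) y) :
    ∃ b, Quotient.mk (arrSetoid ρ) b = β ∧ K.src b = y := by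
  obtain ⟨b0, rfl⟩ := Quotient.exists_rep β
  have h' : Quotient.mk (objSetoid ρ) (K.src b0) = Quotient.mk (objSetoid ρ) y := h
  obtain ⟨g, hg⟩ := Quotient.exact h'
  refine ⟨ρ.onArr g b0, (Quotient.sound (⟨g, rfl⟩ : (arrSetoid ρ).r b0 (ρ.onArr g b0))).symm, ?_⟩
  rw [ρ.src_onArr, hg]

lemma reps_pair (α β : Quotient (arrSetoid ρ)) (h : tgtQ ρ α = srcQ ρ β) :
    ∃ (a b : K.Arr) (hc : K.tgt a = K.src b),
      Quotient.mk (arrSetoid ρ) a = α ∧ Quotient.mk (arrSetoid ρ) b = β := by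
  obtain ⟨a, rfl⟩ := Quotient.exists_rep α
  obtain ⟨b, hb, hs⟩ := rep_src β (K.tgt a) h.symm
  exact ⟨a, b, hs.symm, rfl, hb⟩

lemma comp_existsQ (α β : Quotient (arrSetoid ρ)) (h : tgtQ ρ α = srcQ ρ β) :
    ∃ γ, CompRelQ ρ α β γ := by
  obtain ⟨a, b, hc, ha, hb⟩ := reps_pair α β h
  exact ⟨_, a, b, hc, ha, hb, rfl⟩

lemma comp_uniqueQ (hsr : SemiRegular ρ) {α β γ γ' : Quotient (arrSetoid ρ)}
    (h1 : CompRelQ ρ α β γ) (h2 : CompRelQ ρ α β γ') : γ = γ' := by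
  obtain ⟨a, b, h, rfl, rfl, rfl⟩ := h1
  obtain ⟨a', b', h', ha', hb', rfl⟩ := h2
  obtain ⟨g, rfl⟩ := Quotient.exact ha'.symm
  obtain ⟨k, rfl⟩ := Quotient.exact hb'.symm
  have e1 : ρ.onObj g (K.src b) = ρ.onObj k (K.src b) := by
    rw [ρ.tgt_onArr, ρ.src_onArr, h] at h'; exact h'
  have e2 : ρ.onObj (g * k⁻¹) (K.src b) = K.src b := by
    rw [ρ.onObj_mul, e1, ← ρ.onObj_mul, mul_inv_cancel, ρ.onObj_one]
  have hgk : g = k := by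
    have := hsr.1 _ _ e2
    exact mul_inv_eq_one.mp this
  subst hgk
  exact Quotient.sound ⟨g, by rw [ρ.onArr_comp]⟩

lemma comp_propsQ {α β γ : Quotient (arrSetoid ρ)} (h : CompRelQ ρ α β γ) :
    tgtQ ρ α = srcQ ρ β ∧ srcQ ρ γ = srcQ ρ α ∧ tgtQ ρ γ = tgtQ ρ β := by
  obtain ⟨a, b, hc, rfl, rfl, rfl⟩ := h
  exact ⟨congrArg (Quotient.mk (objSetoid ρ)) hc,
    congrArg (Quotient.mk (objSetoid ρ)) (K.src_comp a b hc),
    congrArg (Quotient.mk (objSetoid ρ)) (K.tgt_comp a b hc)⟩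

lemma comp_assocQ (hsr : SemiRegular ρ) {α β γ p q s t : Quotient (arrSetoid ρ)}
    (hp : CompRelQ ρ α β p) (hq : CompRelQ ρ p γ q)
    (hs : CompRelQ ρ β γ s) (ht : CompRelQ ρ α s t) : q = t := by
  obtain ⟨a, b, hab, ha, hb, hpp⟩ := hp
  obtain ⟨c, hc, hbc⟩ := rep_src γ (K.tgt b) (by
    have h1 := (comp_propsQ hs).1
    rw [← hb, tgtQ_mk] at h1
    exact h1.symm)
  have hq2 : CompRelQ ρ p γ (Quotient.mk (arrSetoid ρ)
      (K.comp (K.comp a b hab) c (by rw [K.tgt_comp]; exact hbc.symm))) :=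
    ⟨K.comp a b hab, c, (by rw [K.tgt_comp]; exact hbc.symm), hpp, hc, rfl⟩
  have hs2 : CompRelQ ρ β γ (Quotient.mk (arrSetoid ρ) (K.comp b c hbc.symm)) :=
    ⟨b, c, hbc.symm, hb, hc, rfl⟩
  have hsval := comp_uniqueQ hsr hs hs2
  have ht2 : CompRelQ ρ α s (Quotient.mk (arrSetoid ρ)
      (K.comp a (K.comp b c hbc.symm) (by rw [K.src_comp]; exact hab))) :=
    ⟨a, K.comp b c hbc.symm, (by rw [K.src_comp]; exact hab), ha, hsval.symm, rfl⟩
  rw [comp_uniqueQ hsr hq hq2, comp_uniqueQ hsr ht ht2]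
  exact congrArg _ (K.assoc a b c hab hbc.symm)

lemma loop_appendQ (hsr : SemiRegular ρ) (hur : UniqRep ρ r n)
    {z l γ : Quotient (arrSetoid ρ)}
    (hzl : CompRelQ ρ z l γ) (hl : srcQ ρ l = tgtQ ρ l) : r γ = r z := by
  obtain ⟨hirr, hrs, hrt, hns, hnt, hdec⟩ := hur.1 z
  have hprops := comp_propsQ hzl
  obtain ⟨m, hm⟩ := comp_existsQ (n z) l (by rw [hnt]; exact hprops.1)
  have hmprops := comp_propsQ hm
  obtain ⟨t0, ht0⟩ := comp_existsQ (r z) m (by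
    rw [hrt, ← hns]; exact hmprops.2.1.symm)
  have hγt0 := comp_assocQ hsr hdec hzl hm ht0
  rw [← hγt0] at ht0
  have hloop_m : srcQ ρ m = tgtQ ρ m := by
    rw [hmprops.2.1, hns, hprops.1, hl, ← hmprops.2.2]
  have htb : tgtQ ρ (r z) = tgtQ ρ γ := by
    rw [hrt, hprops.2.2, ← hl, ← hprops.1]
  exact (hur.2 γ (r z) m ht0 htb hloop_m hirr).1.symm

lemma r_leftQ (hsr : SemiRegular ρ)
    {C : Quotient (arrSetoid ρ) → Quotient (arrSetoid ρ) → Quotient (arrSetoid ρ)}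
    (hC : RightNormalWith ρ C) (hur : UniqRep ρ r n)
    {α β γ ε : Quotient (arrSetoid ρ)}
    (h1 : CompRelQ ρ α β γ) (h2 : CompRelQ ρ (r α) β ε) : r γ = r ε := by
  obtain ⟨hirr, hrs, hrt, hns, hnt, hdec⟩ := hur.1 α
  have hp1 := comp_propsQ h1
  obtain ⟨x', a', hxa, hx, ha⟩ := reps_pair (n α) β (by rw [hnt]; exact hp1.1)
  have hμrel : CompRelQ ρ (n α) β (Quotient.mk (arrSetoid ρ) (K.comp x' a' hxa)) :=
    ⟨x', a', hxa, hx, ha, rfl⟩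
  have hsx : srcQ ρ (Quotient.mk (arrSetoid ρ) x')
      = srcQ ρ (Quotient.mk (arrSetoid ρ) a') := by
    rw [hx, ha, hns, hp1.1]
  have htx : tgtQ ρ (Quotient.mk (arrSetoid ρ) x')
      = srcQ ρ (Quotient.mk (arrSetoid ρ) a') := by
    rw [hx, ha, hnt, hp1.1]
  obtain ⟨⟨hCs, hCt⟩, hCeq⟩ := hC.1 a' x' hsx htx
  obtain ⟨a'', c, h2c, ha'', hc⟩ := reps_pair β
      (C (Quotient.mk (arrSetoid ρ) a') (Quotient.mk (arrSetoid ρ) x'))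
      (by rw [← ha]; exact hCs.symm)
  have hμκ : CompRelQ ρ β (C (Quotient.mk (arrSetoid ρ) a') (Quotient.mk (arrSetoid ρ) x'))
      (Quotient.mk (arrSetoid ρ) (K.comp x' a' hxa)) := by
    have heq := hCeq x' a' hxa rfl rfl a'' c h2c (ha''.trans ha.symm) hc
    exact ⟨a'', c, h2c, ha'', hc, heq.symm⟩
  obtain ⟨t1, ht1⟩ := comp_existsQ (r α) (Quotient.mk (arrSetoid ρ) (K.comp x' a' hxa)) (by
    have hh := (comp_propsQ hμrel).2.1
    rw [hrt, hh, hns])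
  have hγ1 := comp_assocQ hsr hdec h1 hμrel ht1
  rw [← hγ1] at ht1
  obtain ⟨q1, hq1⟩ := comp_existsQ ε
      (C (Quotient.mk (arrSetoid ρ) a') (Quotient.mk (arrSetoid ρ) x')) (by
    have hh := (comp_propsQ h2).2.2
    rw [hh, ← ha]; exact hCs.symm)
  have hq1γ := comp_assocQ hsr h2 hq1 hμκ ht1
  rw [hq1γ] at hq1
  exact loop_appendQ hsr hur hq1 (hCs.trans hCt.symm)

lemma r_rightQ (hsr : SemiRegular ρ) (hur : UniqRep ρ r n)
    {α β ε δ : Quotient (arrSetoid ρ)}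
    (h1 : CompRelQ ρ α β ε) (h2 : CompRelQ ρ α (r β) δ) : r ε = r δ := by
  obtain ⟨hirr, hrs, hrt, hns, hnt, hdec⟩ := hur.1 β
  obtain ⟨q2, hq2⟩ := comp_existsQ δ (n β) (by
    have hh := (comp_propsQ h2).2.2
    rw [hh, hrt, ← hns])
  have hq2ε := comp_assocQ hsr h2 hq2 hdec h1
  rw [hq2ε] at hq2
  exact loop_appendQ hsr hur hq2 (hns.trans hnt.symm)

lemma comp_id_id (K : SmallCat) (x : K.Obj) (h : K.tgt (K.id x) = K.src (K.id x)) :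
    K.comp (K.id x) (K.id x) h = K.id x := by
  calc K.comp (K.id x) (K.id x) h
      = K.comp (K.id x) (K.id (K.tgt (K.id x))) ((K.src_id (K.tgt (K.id x))).symm) :=
        comp_congr' K rfl (congrArg K.id (K.tgt_id x)).symm h _
    _ = K.id x := K.comp_id (K.id x)

lemma r_idQ (hsr : SemiRegular ρ) (hur : UniqRep ρ r n) (x : K.Obj) :
    r (Quotient.mk (arrSetoid ρ) (K.id x)) = Quotient.mk (arrSetoid ρ) (K.id x) := by
  set ι := Quotient.mk (arrSetoid ρ) (K.id x) with hι
  have hsι : srcQ ρ ι = Quotient.mk (objSetoid ρ) x := congrArg _ (K.src_id x)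
  have htι : tgtQ ρ ι = Quotient.mk (objSetoid ρ) x := congrArg _ (K.tgt_id x)
  have hιι : CompRelQ ρ ι ι ι :=
    ⟨K.id x, K.id x, (by rw [K.tgt_id, K.src_id]), rfl, rfl,
      congrArg _ (comp_id_id K x (by rw [K.tgt_id, K.src_id]))⟩
  have hirrι : IrreducibleQ ρ ι := by
    rintro ⟨b, l, hbl, htb, hlid⟩
    obtain ⟨hirr, hrs, hrt, hns, hnt, hdec⟩ := hur.1 ι
    have hρι : CompRelQ ρ (r ι) ι (r ι) := by
      obtain ⟨a, ha⟩ := Quotient.exists_rep (r ι)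
      have h1 : Quotient.mk (objSetoid ρ) (K.tgt a) = Quotient.mk (objSetoid ρ) x := by
        have : tgtQ ρ (Quotient.mk (arrSetoid ρ) a) = Quotient.mk (objSetoid ρ) x := by
          rw [ha, hrt, htι]
        exact this
      obtain ⟨g, hg⟩ := Quotient.exact h1
      refine ⟨a, K.id (K.tgt a), (K.src_id (K.tgt a)).symm, ha, ?_, ?_⟩
      · rw [hι]
        exact Quotient.sound ⟨g, by rw [ρ.onArr_id, hg]⟩
      · rw [← ha]; exact congrArg _ (K.comp_id a)
    obtain ⟨w, hw⟩ := comp_existsQ (r ι) b (by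
      rw [hrt, htι, ← hsι]; exact (comp_propsQ hbl).2.1)
    obtain ⟨q, hq⟩ := comp_existsQ w l (by
      rw [(comp_propsQ hw).2.2]; exact (comp_propsQ hbl).1)
    have hqrι := comp_assocQ hsr hw hq hbl hρι
    rw [hqrι] at hq
    exact hirr ⟨w, l, hq, (by rw [(comp_propsQ hw).2.2, htb, ← hrt]), hlid⟩
  exact (hur.2 ι ι ι hιι rfl (hsι.trans htι.symm) hirrι).1.symm

lemma id_comp_eqQ (x : K.Obj) {α γ : Quotient (arrSetoid ρ)}
    (h : CompRelQ ρ (Quotient.mk (arrSetoid ρ) (K.id x)) α γ) : γ = α := by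
  obtain ⟨b, a, hc, hb, rfl, rfl⟩ := h
  obtain ⟨g, hg⟩ := Quotient.exact hb
  have hbval : b = K.id (ρ.onObj g⁻¹ x) := by
    rw [← ρ.onArr_id, ← hg, ← ρ.onArr_mul, mul_inv_cancel, ρ.onArr_one]
  subst hbval
  have hsrc : ρ.onObj g⁻¹ x = K.src a := by
    rw [← K.tgt_id (ρ.onObj g⁻¹ x)]; exact hc
  refine congrArg _ ?_
  calc K.comp (K.id (ρ.onObj g⁻¹ x)) a hc
      = K.comp (K.id (K.src a)) a (K.tgt_id (K.src a)) :=
        comp_congr' K (congrArg K.id hsrc) rfl hc _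
    _ = a := K.id_comp a

lemma comp_id_eqQ (x : K.Obj) {α γ : Quotient (arrSetoid ρ)}
    (h : CompRelQ ρ α (Quotient.mk (arrSetoid ρ) (K.id x)) γ) : γ = α := by
  obtain ⟨a, b, hc, rfl, hb, rfl⟩ := h
  obtain ⟨g, hg⟩ := Quotient.exact hb
  have hbval : b = K.id (ρ.onObj g⁻¹ x) := by
    rw [← ρ.onArr_id, ← hg, ← ρ.onArr_mul, mul_inv_cancel, ρ.onArr_one]
  subst hbval
  have htgt : K.tgt a = ρ.onObj g⁻¹ x := by
    rw [← K.src_id (ρ.onObj g⁻¹ x)]; exact hc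
  refine congrArg _ ?_
  calc K.comp a (K.id (ρ.onObj g⁻¹ x)) hc
      = K.comp a (K.id (K.tgt a)) ((K.src_id (K.tgt a)).symm) :=
        comp_congr' K rfl (congrArg K.id htgt.symm) hc _
    _ = a := K.comp_id a

end AuxFlat

/-- Let `G ≤ Aut K` be translative and right-normal, with the
orbit category `K/G` uniquely representable by irreducible arrows (irreducible
part `r`, loop part `n`).  Then the partial operation `x • y := r(x * y)` on
the arrows of `K/G` is well defined, satisfies `x • y = r x • r y`, and is
associative; identities behave neutrally and are preserved by `r`, so that the
image `r[K/G]` becomes a category (the flat orbit category), and `r` is a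
homomorphism from `(K/G, *)` onto `(r[K/G], •)`.  (Compositions in `K/G` are
expressed by the relation `CompRelQ`.) -/
theorem flat_orbit_category {G : Type} [Group G] (K : SmallCat)
    (ρ : CatAction G K) (htr : Translative ρ) (hrn : RightNormal ρ)
    (r n : Quotient (arrSetoid ρ) → Quotient (arrSetoid ρ))
    (hur : UniqRep ρ r n) :
    (∀ α β γ γ', CompRelQ ρ α β γ → CompRelQ ρ α β γ' → r γ = r γ') ∧
    (∀ α β γ δ, CompRelQ ρ α β γ → CompRelQ ρ (r α) (r β) δ → r γ = r δ) ∧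
    (∀ α β γ p q s t, CompRelQ ρ α β p → CompRelQ ρ (r p) γ q →
      CompRelQ ρ β γ s → CompRelQ ρ α (r s) t → r q = r t) ∧
    (∀ x : K.Obj, r (Quotient.mk (arrSetoid ρ) (K.id x)) =
      Quotient.mk (arrSetoid ρ) (K.id x)) ∧
    (∀ (x : K.Obj) (α γ : Quotient (arrSetoid ρ)),
      CompRelQ ρ (Quotient.mk (arrSetoid ρ) (K.id x)) α γ → r γ = r α) ∧
    (∀ (x : K.Obj) (α γ : Quotient (arrSetoid ρ)),
      CompRelQ ρ α (Quotient.mk (arrSetoid ρ) (K.id x)) γ → r γ = r α) := by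
  obtain ⟨C, hC⟩ := hrn
  have hsr := htr.1
  refine ⟨?_, ?_, ?_, ?_, ?_, ?_⟩
  · intro α β γ γ' h1 h2; rw [comp_uniqueQ hsr h1 h2]
  · intro α β γ δ h1 h2
    obtain ⟨hirr, hrs, hrt, h4, h5, h6⟩ := hur.1 α
    obtain ⟨ε, hε⟩ := comp_existsQ (r α) β (by rw [hrt]; exact (comp_propsQ h1).1)
    exact (r_leftQ hsr hC hur h1 hε).trans (r_rightQ hsr hur hε h2)
  · intro α β γ p q s t hp hq hs ht
    obtain ⟨q0, hq0⟩ := comp_existsQ p γ (by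
      rw [← (hur.1 p).2.2.1]; exact (comp_propsQ hq).1)
    have hq0q : r q0 = r q := r_leftQ hsr hC hur hq0 hq
    obtain ⟨t0, ht0⟩ := comp_existsQ α s (by
      rw [(comp_propsQ hp).1]; exact (comp_propsQ hs).2.1.symm)
    have hq0t0 : q0 = t0 := comp_assocQ hsr hp hq0 hs ht0
    have htt : r t0 = r t := r_rightQ hsr hur ht0 ht
    rw [← hq0q, hq0t0]; exact htt
  · exact r_idQ hsr hur
  · intro x α γ h; rw [id_comp_eqQ x h]
  · intro x α γ h; rw [comp_id_eqQ x h]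
end

section
/- Let K be a category, G ≤ Aut(K) a translative automorphism group that is right-normal on K (with loop-moving map C), such that the orbit category K/G is uniquely representable by irreducible arrows (with irreducible part r and loop part n), and let (K/G, A, G) be a representation of K. Define n̂(a,b) := n(a*b) and equip the product of the flat orbit category r[K/G] with the orbit category of loops with the composition (r(a), x) * (r(b), y) := ( r(r(a) * r(b)), n̂(r(a), r(b)) * C(r(b), x) * y ). Then the map φ(x, y) := x * y from this product category to the orbit category K/G is an isomorphism of categories. -/
set_option linter.unusedVariables false

section AuxLemmas

variable {G : Type} [Group G] {K : SmallCat} (ρ : CatAction G K)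

/-- Composition with a propositionally equal right factor. -/
lemma comp_congr_right (a b b' : K.Arr) (h : K.tgt a = K.src b) (h' : K.tgt a = K.src b')
    (e : b = b') : K.comp a b h = K.comp a b' h' := by subst e; rfl

/-- Composition with a propositionally equal left factor. -/
lemma comp_congr_left (a a' b : K.Arr) (h : K.tgt a = K.src b) (h' : K.tgt a' = K.src b)
    (e : a = a') : K.comp a b h = K.comp a' b h' := by subst e; rfl

lemma mkArr_onArr (g : G) (a : K.Arr) :
    Quotient.mk (arrSetoid ρ) (ρ.onArr g a) = Quotient.mk (arrSetoid ρ) a :=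
  (Quotient.sound (⟨g, rfl⟩ : (arrSetoid ρ).r a (ρ.onArr g a))).symm

lemma mk_comp (a b : K.Arr) (h : K.tgt a = K.src b) :
    CompRelQ ρ (Quotient.mk (arrSetoid ρ) a) (Quotient.mk (arrSetoid ρ) b)
      (Quotient.mk (arrSetoid ρ) (K.comp a b h)) :=
  ⟨a, b, h, rfl, rfl, rfl⟩

/-- Semi-regularity makes composition of orbits well defined. -/
lemma compQ_uniq (hSR : SemiRegular ρ) {α β γ γ' : Quotient (arrSetoid ρ)}
    (h1 : CompRelQ ρ α β γ) (h2 : CompRelQ ρ α β γ') : γ = γ' := by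
  obtain ⟨a, b, h, ha, hb, hg⟩ := h1
  obtain ⟨a', b', h', ha', hb', hg'⟩ := h2
  obtain ⟨g, hga⟩ := Quotient.exact (ha.trans ha'.symm)
  obtain ⟨k, hkb⟩ := Quotient.exact (hb.trans hb'.symm)
  subst hga
  have hsrc : ρ.onObj (k * g⁻¹) (K.src b) = K.src b := by
    have e1 : ρ.onArr (k * g⁻¹) b = ρ.onArr g⁻¹ b' := by
      rw [ρ.onArr_mul, hkb]
    have e2 : K.src (ρ.onArr (k * g⁻¹) b) = ρ.onObj (k * g⁻¹) (K.src b) := ρ.src_onArr _ _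
    have e3 : K.src (ρ.onArr g⁻¹ b') = ρ.onObj g⁻¹ (K.src b') := ρ.src_onArr _ _
    have e4 : K.src b' = K.tgt (ρ.onArr g a) := h'.symm
    have e5 : K.tgt (ρ.onArr g a) = ρ.onObj g (K.tgt a) := ρ.tgt_onArr _ _
    have : ρ.onObj (k * g⁻¹) (K.src b) = ρ.onObj g⁻¹ (ρ.onObj g (K.tgt a)) := by
      rw [← e2, e1, e3, e4, e5]
    rw [this, ← ρ.onObj_mul, mul_inv_cancel, ρ.onObj_one, h]
  have hk1 : k * g⁻¹ = 1 := hSR.1 _ _ hsrc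
  have hkg : k = g := by
    have := mul_eq_one_iff_eq_inv.mp hk1
    simpa using this
  have hb'' : b' = ρ.onArr g b := by rw [← hkb, hkg]
  subst hb''
  have ecomp : K.comp (ρ.onArr g a) (ρ.onArr g b) h' = ρ.onArr g (K.comp a b h) :=
    (ρ.onArr_comp g a b h).symm
  rw [← hg, ← hg', ecomp, mkArr_onArr]

lemma compQ_src {α β γ : Quotient (arrSetoid ρ)} (h : CompRelQ ρ α β γ) :
    srcQ ρ γ = srcQ ρ α := by
  obtain ⟨a, b, h, ha, hb, hg⟩ := h
  rw [← hg, ← ha]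
  show Quotient.mk _ (K.src (K.comp a b h)) = Quotient.mk _ (K.src a)
  rw [K.src_comp]

lemma compQ_tgt {α β γ : Quotient (arrSetoid ρ)} (h : CompRelQ ρ α β γ) :
    tgtQ ρ γ = tgtQ ρ β := by
  obtain ⟨a, b, h, ha, hb, hg⟩ := h
  rw [← hg, ← hb]
  show Quotient.mk _ (K.tgt (K.comp a b h)) = Quotient.mk _ (K.tgt b)
  rw [K.tgt_comp]

lemma compQ_mid {α β γ : Quotient (arrSetoid ρ)} (h : CompRelQ ρ α β γ) :
    srcQ ρ β = tgtQ ρ α := by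
  obtain ⟨a, b, h, ha, hb, hg⟩ := h
  rw [← ha, ← hb]
  show Quotient.mk _ (K.src b) = Quotient.mk _ (K.tgt a)
  rw [h]

/-- Translate a representative so that its source becomes a given object. -/
lemma translate_src (b : K.Arr) (x : K.Obj)
    (h : Quotient.mk (objSetoid ρ) (K.src b) = Quotient.mk (objSetoid ρ) x) :
    ∃ b', Quotient.mk (arrSetoid ρ) b' = Quotient.mk (arrSetoid ρ) b ∧ K.src b' = x := by
  obtain ⟨g, hg⟩ := Quotient.exact h
  exact ⟨ρ.onArr g b, mkArr_onArr ρ g b, by rw [ρ.src_onArr, hg]⟩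

/-- Pick a representative of `β` with source a given object `z` in the right orbit. -/
lemma exists_rep_src {β : Quotient (arrSetoid ρ)} {z : K.Obj}
    (h : srcQ ρ β = Quotient.mk (objSetoid ρ) z) :
    ∃ b, Quotient.mk (arrSetoid ρ) b = β ∧ K.src b = z := by
  obtain ⟨b₀, hb₀⟩ := Quotient.exists_rep β
  have : Quotient.mk (objSetoid ρ) (K.src b₀) = Quotient.mk (objSetoid ρ) z := by
    rw [← h, ← hb₀]; rfl
  obtain ⟨b, hb, hsb⟩ := translate_src ρ b₀ z this
  exact ⟨b, hb.trans hb₀, hsb⟩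

/-- Realize a `CompRelQ` relation starting at any given representative of `α`. -/
lemma compQ_realize {α β γ : Quotient (arrSetoid ρ)} (h : CompRelQ ρ α β γ)
    (a : K.Arr) (ha : Quotient.mk (arrSetoid ρ) a = α) :
    ∃ (b : K.Arr) (h' : K.tgt a = K.src b), Quotient.mk (arrSetoid ρ) b = β ∧
      Quotient.mk (arrSetoid ρ) (K.comp a b h') = γ := by
  obtain ⟨a₀, b₀, h₀, ha₀, hb₀, hg₀⟩ := h
  obtain ⟨g, hga⟩ := Quotient.exact (ha₀.trans ha.symm)
  subst hga
  refine ⟨ρ.onArr g b₀, ?_, (mkArr_onArr ρ g b₀).trans hb₀, ?_⟩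
  · rw [ρ.tgt_onArr, ρ.src_onArr, h₀]
  · rw [← hg₀]
    have : K.comp (ρ.onArr g a₀) (ρ.onArr g b₀)
        (by rw [ρ.tgt_onArr, ρ.src_onArr, h₀]) = ρ.onArr g (K.comp a₀ b₀ h₀) :=
      (ρ.onArr_comp g a₀ b₀ h₀).symm
    rw [this, mkArr_onArr]

end AuxLemmas

/-- Let `G ≤ Aut K` be translative, right-normal with
loop-moving map `C`, with `K/G` uniquely representable by irreducible arrows
(irreducible part `r`, loop part `n`, and `n̂(a,b) = n(a*b)`), and let `A` be
an annotation making `(K/G, A, G)` a representation of `K`.  Then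
`φ(x, y) := x * y` is an isomorphism of categories from the product of the
flat orbit category `r[K/G]` with the orbit category of loops (carrying the
composition `(r a, x) * (r b, y) = (r(r a * r b), n̂(r a, r b) * C(r b, x) * y)`)
onto the orbit category `K/G`:  every pair (irreducible arrow, loop at its
target) has a unique composite, every arrow of `K/G` arises from exactly one
such pair, and `φ` transforms the twisted composition into composition in
`K/G`. -/
theorem flat_product_iso_orbit_category {G : Type} [Group G] (K : SmallCat)
    (ρ : CatAction G K) (htr : Translative ρ)
    (C : Quotient (arrSetoid ρ) → Quotient (arrSetoid ρ) → Quotient (arrSetoid ρ))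
    (hC : RightNormalWith ρ C)
    (r n : Quotient (arrSetoid ρ) → Quotient (arrSetoid ρ))
    (hur : UniqRep ρ r n)
    (AQ : Quotient (arrSetoid ρ) → G)
    (hAQid : ∀ x : K.Obj, AQ (Quotient.mk (arrSetoid ρ) (K.id x)) = 1)
    (hAQ : ∀ α β γ, CompRelQ ρ α β γ → AQ γ = AQ β * AQ α) :
    (∀ ξ lp : Quotient (arrSetoid ρ), IrreducibleQ ρ ξ →
      srcQ ρ lp = tgtQ ρ ξ → tgtQ ρ lp = tgtQ ρ ξ →
      ∃! γ, CompRelQ ρ ξ lp γ) ∧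
    (∀ γ : Quotient (arrSetoid ρ),
      ∃! p : Quotient (arrSetoid ρ) × Quotient (arrSetoid ρ),
        IrreducibleQ ρ p.1 ∧ srcQ ρ p.2 = tgtQ ρ p.1 ∧ tgtQ ρ p.2 = tgtQ ρ p.1 ∧
        CompRelQ ρ p.1 p.2 γ) ∧
    (∀ ξ ζ x y u v w p q1 q2 s : Quotient (arrSetoid ρ),
      IrreducibleQ ρ ξ → IrreducibleQ ρ ζ →
      srcQ ρ x = tgtQ ρ ξ → tgtQ ρ x = tgtQ ρ ξ →
      srcQ ρ y = tgtQ ρ ζ → tgtQ ρ y = tgtQ ρ ζ →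
      CompRelQ ρ ξ x u → CompRelQ ρ ζ y v → CompRelQ ρ u v w →
      CompRelQ ρ ξ ζ p →
      CompRelQ ρ (n p) (C ζ x) q1 → CompRelQ ρ q1 y q2 →
      CompRelQ ρ (r p) q2 s → s = w) := by
  have hSR := htr.1
  refine ⟨?_, ?_, ?_⟩
  · -- Part 1: unique composite of an irreducible arrow and a loop
    intro ξ lp hirr hs ht
    obtain ⟨a, ha⟩ := Quotient.exists_rep ξ
    have h1 : srcQ ρ lp = Quotient.mk (objSetoid ρ) (K.tgt a) := by rw [hs, ← ha]; rfl
    obtain ⟨l, hl, hsl⟩ := exists_rep_src ρ h1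
    refine ⟨Quotient.mk (arrSetoid ρ) (K.comp a l hsl.symm), ⟨a, l, hsl.symm, ha, hl, rfl⟩, ?_⟩
    intro γ hγ
    exact compQ_uniq ρ hSR hγ ⟨a, l, hsl.symm, ha, hl, rfl⟩
  · -- Part 2: unique decomposition
    intro γ
    obtain ⟨hirr, hsr, htr', hsn, htn, hcomp⟩ := hur.1 γ
    refine ⟨(r γ, n γ), ⟨hirr, by rw [hsn, htr'], by rw [htn, htr'], hcomp⟩, ?_⟩
    rintro ⟨q1, q2⟩ ⟨hq1, hq2, hq3, hq4⟩
    have ht1 : tgtQ ρ q1 = tgtQ ρ γ := by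
      have h := compQ_tgt ρ hq4
      rw [h, hq3]
    have hll : srcQ ρ q2 = tgtQ ρ q2 := by rw [hq2, hq3]
    obtain ⟨e1, e2⟩ := hur.2 γ q1 q2 hq4 ht1 hll hq1
    exact Prod.ext e1 e2
  · -- Part 3: φ is a homomorphism for the twisted product composition
    intro ξ ζ x y u v w p q1 q2 s hirrξ hirrζ hx1 hx2 hy1 hy2 hu hv hw hp hq1 hq2 hs
    have hζsrc : srcQ ρ ζ = tgtQ ρ ξ := compQ_mid ρ hp
    have hptgt : tgtQ ρ p = tgtQ ρ ζ := compQ_tgt ρ hp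
    -- right-normal data for (ζ, x)
    obtain ⟨zζ, hzζ⟩ := Quotient.exists_rep ζ
    obtain ⟨zx, hzx⟩ := Quotient.exists_rep x
    have hCmain := hC.1 zζ zx
      (by rw [hzζ, hzx, hx1, hζsrc]) (by rw [hzζ, hzx, hx2, hζsrc])
    rw [hzζ, hzx] at hCmain
    obtain ⟨⟨hCsrc, hCtgt⟩, hCmove⟩ := hCmain
    -- decomposition p = (r p) * (n p) with a composable chain r₁, n₂
    obtain ⟨_, hrs, hrt, hns, hnt, hrnp⟩ := hur.1 p
    obtain ⟨r₁, n₂, hrn, hr₁, hn₂, hprn⟩ := hrnp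
    -- cc : representative of C ζ x with source tgt n₂
    have hn₂tgt : tgtQ ρ p = Quotient.mk (objSetoid ρ) (K.tgt n₂) := by
      rw [← hprn]
      show Quotient.mk _ (K.tgt (K.comp r₁ n₂ hrn)) = _
      rw [K.tgt_comp]
    have hCsrc' : srcQ ρ (C ζ x) = Quotient.mk (objSetoid ρ) (K.tgt n₂) := by
      rw [hCsrc, ← hptgt, hn₂tgt]
    obtain ⟨cc, hcc, hccsrc⟩ := exists_rep_src ρ hCsrc'
    -- yy : representative of y with source tgt cc
    have hysrc' : srcQ ρ y = Quotient.mk (objSetoid ρ) (K.tgt cc) := by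
      rw [hy1, ← hCtgt, ← hcc]; rfl
    obtain ⟨yy, hyy, hyysrc⟩ := exists_rep_src ρ hysrc'
    -- compute s
    have pf_nc : K.tgt n₂ = K.src cc := hccsrc.symm
    have hq1e : Quotient.mk (arrSetoid ρ) (K.comp n₂ cc pf_nc) = q1 :=
      compQ_uniq ρ hSR ⟨n₂, cc, pf_nc, hn₂, hcc, rfl⟩ hq1
    have pf_ncy : K.tgt (K.comp n₂ cc pf_nc) = K.src yy := by rw [K.tgt_comp, hyysrc]
    have hq2e : Quotient.mk (arrSetoid ρ) (K.comp (K.comp n₂ cc pf_nc) yy pf_ncy) = q2 :=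
      compQ_uniq ρ hSR ⟨_, yy, pf_ncy, hq1e, hyy, rfl⟩ hq2
    have pf_rncy : K.tgt r₁ = K.src (K.comp (K.comp n₂ cc pf_nc) yy pf_ncy) := by
      rw [K.src_comp, K.src_comp]; exact hrn
    have hse : s = Quotient.mk (arrSetoid ρ)
        (K.comp r₁ (K.comp (K.comp n₂ cc pf_nc) yy pf_ncy) pf_rncy) :=
      compQ_uniq ρ hSR hs ⟨r₁, _, pf_rncy, hr₁, hq2e, rfl⟩
    -- compute w : representatives a, x₀, b₀, y₀
    obtain ⟨a, ha⟩ := Quotient.exists_rep ξ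
    have hx1' : srcQ ρ x = Quotient.mk (objSetoid ρ) (K.tgt a) := by rw [hx1, ← ha]; rfl
    obtain ⟨x₀, hx₀, hx₀src⟩ := exists_rep_src ρ hx1'
    have hζ' : srcQ ρ ζ = Quotient.mk (objSetoid ρ) (K.tgt x₀) := by
      rw [hζsrc, ← hx2, ← hx₀]; rfl
    obtain ⟨b₀, hb₀, hb₀src⟩ := exists_rep_src ρ hζ'
    have hy' : srcQ ρ y = Quotient.mk (objSetoid ρ) (K.tgt b₀) := by
      rw [hy1, ← hb₀]; rfl
    obtain ⟨y₀, hy₀, hy₀src⟩ := exists_rep_src ρ hy'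
    have pf_ax : K.tgt a = K.src x₀ := hx₀src.symm
    have pf_xb : K.tgt x₀ = K.src b₀ := hb₀src.symm
    have pf_by : K.tgt b₀ = K.src y₀ := hy₀src.symm
    have hue : Quotient.mk (arrSetoid ρ) (K.comp a x₀ pf_ax) = u :=
      compQ_uniq ρ hSR ⟨a, x₀, pf_ax, ha, hx₀, rfl⟩ hu
    have hve : Quotient.mk (arrSetoid ρ) (K.comp b₀ y₀ pf_by) = v :=
      compQ_uniq ρ hSR ⟨b₀, y₀, pf_by, hb₀, hy₀, rfl⟩ hv
    have pf_uv : K.tgt (K.comp a x₀ pf_ax) = K.src (K.comp b₀ y₀ pf_by) := by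
      rw [K.tgt_comp, K.src_comp]; exact pf_xb
    have hwe : w = Quotient.mk (arrSetoid ρ)
        (K.comp (K.comp a x₀ pf_ax) (K.comp b₀ y₀ pf_by) pf_uv) :=
      compQ_uniq ρ hSR hw ⟨_, _, pf_uv, hue, hve, rfl⟩
    -- bp : representative of ζ with source tgt a ; cp : rep of C ζ x after bp
    have hζ'' : srcQ ρ ζ = Quotient.mk (objSetoid ρ) (K.tgt a) := by rw [hζsrc, ← ha]; rfl
    obtain ⟨bp, hbp, hbpsrc⟩ := exists_rep_src ρ hζ''
    have pf_abp : K.tgt a = K.src bp := hbpsrc.symm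
    have hpe : Quotient.mk (arrSetoid ρ) (K.comp a bp pf_abp) = p :=
      compQ_uniq ρ hSR ⟨a, bp, pf_abp, ha, hbp, rfl⟩ hp
    have hC'' : srcQ ρ (C ζ x) = Quotient.mk (objSetoid ρ) (K.tgt bp) := by
      rw [hCsrc, ← hbp]; rfl
    obtain ⟨cp, hcp, hcpsrc⟩ := exists_rep_src ρ hC''
    have pf_bpcp : K.tgt bp = K.src cp := hcpsrc.symm
    -- right-normal swap
    have hswap : Quotient.mk (arrSetoid ρ) (K.comp x₀ b₀ pf_xb) =
        Quotient.mk (arrSetoid ρ) (K.comp bp cp pf_bpcp) :=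
      hCmove x₀ b₀ pf_xb hx₀ hb₀ bp cp pf_bpcp hbp hcp
    -- reassociate w to the form ((a ∘ (x₀∘b₀)) ∘ y₀)
    have pf_axb : K.tgt (K.comp a x₀ pf_ax) = K.src b₀ := by rw [K.tgt_comp]; exact pf_xb
    have pf_axby : K.tgt (K.comp (K.comp a x₀ pf_ax) b₀ pf_axb) = K.src y₀ := by
      rw [K.tgt_comp]; exact pf_by
    have E1 : K.comp (K.comp a x₀ pf_ax) (K.comp b₀ y₀ pf_by) pf_uv =
        K.comp (K.comp (K.comp a x₀ pf_ax) b₀ pf_axb) y₀ pf_axby :=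
      (K.assoc (K.comp a x₀ pf_ax) b₀ y₀ pf_axb pf_by).symm
    have pf_a_xb : K.tgt a = K.src (K.comp x₀ b₀ pf_xb) := by rw [K.src_comp]; exact pf_ax
    have E2 : K.comp (K.comp a x₀ pf_ax) b₀ pf_axb =
        K.comp a (K.comp x₀ b₀ pf_xb) pf_a_xb :=
      K.assoc a x₀ b₀ pf_ax pf_xb
    have pf_Zy : K.tgt (K.comp a (K.comp x₀ b₀ pf_xb) pf_a_xb) = K.src y₀ := by
      rw [K.tgt_comp, K.tgt_comp]; exact pf_by
    have hwe2 : w = Quotient.mk (arrSetoid ρ)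
        (K.comp (K.comp a (K.comp x₀ b₀ pf_xb) pf_a_xb) y₀ pf_Zy) := by
      rw [hwe, E1]
      exact congrArg _ (comp_congr_left _ _ _ pf_axby pf_Zy E2)
    -- replace x₀∘b₀ by bp∘cp at the class level
    have pf_a_bpcp : K.tgt a = K.src (K.comp bp cp pf_bpcp) := by
      rw [K.src_comp]; exact pf_abp
    have eA : Quotient.mk (arrSetoid ρ) (K.comp a (K.comp x₀ b₀ pf_xb) pf_a_xb) =
        Quotient.mk (arrSetoid ρ) (K.comp a (K.comp bp cp pf_bpcp) pf_a_bpcp) :=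
      compQ_uniq ρ hSR ⟨a, _, pf_a_xb, rfl, rfl, rfl⟩
        ⟨a, _, pf_a_bpcp, rfl, hswap.symm, rfl⟩
    -- w as a composite of a rep of class (a∘(bp∘cp)) with a rep of y
    have hrelw : CompRelQ ρ
        (Quotient.mk (arrSetoid ρ) (K.comp a (K.comp bp cp pf_bpcp) pf_a_bpcp)) y w :=
      ⟨K.comp a (K.comp x₀ b₀ pf_xb) pf_a_xb, y₀, pf_Zy, eA, hy₀, hwe2.symm⟩
    -- Z' = a ∘ (bp ∘ cp) reassociates to (a ∘ bp) ∘ cp, whose class is p * (C ζ x)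
    have pf_abp_cp : K.tgt (K.comp a bp pf_abp) = K.src cp := by
      rw [K.tgt_comp]; exact pf_bpcp
    have E3 : K.comp (K.comp a bp pf_abp) cp pf_abp_cp =
        K.comp a (K.comp bp cp pf_bpcp) pf_a_bpcp :=
      K.assoc a bp cp pf_abp pf_bpcp
    have pf_rn_cc : K.tgt (K.comp r₁ n₂ hrn) = K.src cc := by
      rw [K.tgt_comp]; exact pf_nc
    have eZ : Quotient.mk (arrSetoid ρ) (K.comp a (K.comp bp cp pf_bpcp) pf_a_bpcp) =
        Quotient.mk (arrSetoid ρ) (K.comp (K.comp r₁ n₂ hrn) cc pf_rn_cc) := by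
      have h1 : CompRelQ ρ p (C ζ x)
          (Quotient.mk (arrSetoid ρ) (K.comp (K.comp a bp pf_abp) cp pf_abp_cp)) :=
        ⟨_, cp, pf_abp_cp, hpe, hcp, rfl⟩
      have h2 : CompRelQ ρ p (C ζ x)
          (Quotient.mk (arrSetoid ρ) (K.comp (K.comp r₁ n₂ hrn) cc pf_rn_cc)) :=
        ⟨_, cc, pf_rn_cc, hprn, hcc, rfl⟩
      rw [← congrArg (Quotient.mk (arrSetoid ρ)) E3]
      exact compQ_uniq ρ hSR h1 h2
    -- hence w is the class of ((r₁ ∘ n₂) ∘ cc) ∘ yy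
    have pf_rncc_yy : K.tgt (K.comp (K.comp r₁ n₂ hrn) cc pf_rn_cc) = K.src yy := by
      rw [K.tgt_comp, hyysrc]
    have hrelw2 : CompRelQ ρ
        (Quotient.mk (arrSetoid ρ) (K.comp (K.comp r₁ n₂ hrn) cc pf_rn_cc)) y w := by
      rw [← eZ]; exact hrelw
    have hwe3 : w = Quotient.mk (arrSetoid ρ)
        (K.comp (K.comp (K.comp r₁ n₂ hrn) cc pf_rn_cc) yy pf_rncc_yy) :=
      compQ_uniq ρ hSR hrelw2 ⟨_, yy, pf_rncc_yy, rfl, hyy, rfl⟩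
    -- final reassociation: ((r₁∘n₂)∘cc)∘yy = r₁∘((n₂∘cc)∘yy)
    have pf_r_nc : K.tgt r₁ = K.src (K.comp n₂ cc pf_nc) := by
      rw [K.src_comp]; exact hrn
    have E4 : K.comp (K.comp r₁ n₂ hrn) cc pf_rn_cc =
        K.comp r₁ (K.comp n₂ cc pf_nc) pf_r_nc :=
      K.assoc r₁ n₂ cc hrn pf_nc
    have pf_rnc_yy : K.tgt (K.comp r₁ (K.comp n₂ cc pf_nc) pf_r_nc) = K.src yy := by
      rw [K.tgt_comp, K.tgt_comp, hyysrc]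
    have E5 : K.comp (K.comp (K.comp r₁ n₂ hrn) cc pf_rn_cc) yy pf_rncc_yy =
        K.comp (K.comp r₁ (K.comp n₂ cc pf_nc) pf_r_nc) yy pf_rnc_yy :=
      comp_congr_left _ _ _ pf_rncc_yy pf_rnc_yy E4
    have E6 : K.comp (K.comp r₁ (K.comp n₂ cc pf_nc) pf_r_nc) yy pf_rnc_yy =
        K.comp r₁ (K.comp (K.comp n₂ cc pf_nc) yy pf_ncy) pf_rncy :=
      K.assoc r₁ (K.comp n₂ cc pf_nc) yy pf_r_nc pf_ncy
    rw [hse, hwe3, E5, E6]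
end
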